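/- arXiv:2307.15491 — 3 statements merged into one kernel-verified Lean document; each statement's English description precedes it below -/
import Mathlib

section
/- In a perfectly reflecting waveguide with dispersion curves ω_n(t) = t c_w π (2n−1) / (2D √(t² − r²/c_w²)) for t > r/c_w, the warping ψ(t) = √(t² + r²/c_w²) transforms them into constant curves: ψ'(t) ω_n(ψ(t)) = c_w π (2n−1)/(2D) for all t > 0. -/
open Real

theorem ideal_waveguide_warping_flattens (cw D r : ℝ) (hcw : 0 < cw) (hD : 0 < D)
    (hr : 0 < r) (n : ℕ) (hn : 1 ≤ n) (ωn ψ : ℝ → ℝ)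
    (hωn : ∀ s, ωn s = s * cw * π * (2 * (n : ℝ) - 1) /
      (2 * D * Real.sqrt (s ^ 2 - r ^ 2 / cw ^ 2)))
    (hψ : ∀ t, ψ t = Real.sqrt (t ^ 2 + r ^ 2 / cw ^ 2))
    (t : ℝ) (ht : 0 < t) :
    deriv ψ t * ωn (ψ t) = cw * π * (2 * (n : ℝ) - 1) / (2 * D) := by
  set a := r ^ 2 / cw ^ 2 with ha
  have ha0 : 0 < a := div_pos (pow_pos hr 2) (pow_pos hcw 2)
  have hpos : 0 < t ^ 2 + a := by positivity
  have hs : 0 < Real.sqrt (t ^ 2 + a) := Real.sqrt_pos.2 hpos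
  -- derivative of ψ
  have hderiv : deriv ψ t = t / Real.sqrt (t ^ 2 + a) := by
    have h1 : HasDerivAt (fun x : ℝ => x ^ 2 + a) (2 * t) t := by
      simpa using ((hasDerivAt_pow 2 t).add_const a)
    have h2 : HasDerivAt (fun x : ℝ => Real.sqrt (x ^ 2 + a))
        (2 * t / (2 * Real.sqrt (t ^ 2 + a))) t := h1.sqrt hpos.ne'
    have hfun : ψ = fun x : ℝ => Real.sqrt (x ^ 2 + a) := funext hψ
    rw [hfun, h2.deriv]
    field_simp
  have hψt : ψ t = Real.sqrt (t ^ 2 + a) := hψ t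
  have hψsq : (ψ t) ^ 2 - a = t ^ 2 := by
    rw [hψt, Real.sq_sqrt hpos.le]; ring
  have hsqrt2 : Real.sqrt ((ψ t) ^ 2 - a) = t := by
    rw [hψsq, Real.sqrt_sq ht.le]
  rw [hderiv, hωn, hsqrt2, hψt]
  field_simp
end

section
/- Consider the dispersion relation for the Pekeris waveguide: tan(D√(ω²/c_w² − k²)) = −(ρ_b/ρ_w) · √(ω²/c_w² − k²)/√(k² − ω²/c_b²), for k ∈ (ω/c_b, ω/c_w), with 0 < c_w < c_b and ρ_w, ρ_b, D > 0. Define F(k) = tan(D√(ω²/c_w² − k²)) + (ρ_b/ρ_w)√(ω²/c_w² − k²)/√(k² − ω²/c_b²). Then F is continuous on each subinterval of (ω/c_b, ω/c_w) where the tangent argument avoids π/2 + πℤ, and on any maximal subinterval where D√(ω²/c_w² − k²) ∈ (π(m − 1/2), π m) for integer m ≥ 1, F changes sign, hence has at least one root. -/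
open Real Set Filter Topology

set_option maxHeartbeats 1000000

theorem pekeris_dispersion_root (ω cw cb ρw ρb D : ℝ)
    (hω : 0 < ω) (hcw : 0 < cw) (hcb : cw < cb) (hρw : 0 < ρw) (hρb : 0 < ρb) (hD : 0 < D)
    (F : ℝ → ℝ)
    (hF : ∀ k, F k = Real.tan (D * Real.sqrt (ω ^ 2 / cw ^ 2 - k ^ 2)) +
      (ρb / ρw) * Real.sqrt (ω ^ 2 / cw ^ 2 - k ^ 2) / Real.sqrt (k ^ 2 - ω ^ 2 / cb ^ 2))
    (m : ℕ) (hm : 1 ≤ m) (a b : ℝ) (hab : a < b)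
    (ha : ω / cb < a) (hb : b < ω / cw)
    (hθa : D * Real.sqrt (ω ^ 2 / cw ^ 2 - a ^ 2) = π * m)
    (hθb : D * Real.sqrt (ω ^ 2 / cw ^ 2 - b ^ 2) = π * ((m : ℝ) - 1 / 2)) :
    ContinuousOn F {k : ℝ | k ∈ Set.Ioo (ω / cb) (ω / cw) ∧
        ∀ j : ℤ, D * Real.sqrt (ω ^ 2 / cw ^ 2 - k ^ 2) ≠ π / 2 + π * j} ∧
      ∃ k ∈ Set.Ioo a b, F k = 0 := by
  have hπ : (0:ℝ) < π := Real.pi_pos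
  have hcb0 : 0 < cb := hcw.trans hcb
  have hωcb : 0 < ω / cb := div_pos hω hcb0
  have hm1 : (1:ℝ) ≤ m := by exact_mod_cast hm
  set A := ω ^ 2 / cw ^ 2 with hAdef
  set B := ω ^ 2 / cb ^ 2 with hBdef
  have hBlt : ∀ k : ℝ, ω / cb < k → B < k ^ 2 := by
    intro k hk
    have h1 : (ω / cb) ^ 2 < k ^ 2 := pow_lt_pow_left₀ hk hωcb.le (by norm_num)
    calc B = (ω / cb) ^ 2 := by rw [hBdef, div_pow]
      _ < k ^ 2 := h1
  have hθc : Continuous (fun k : ℝ => D * Real.sqrt (A - k ^ 2)) :=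
    continuous_const.mul (Real.continuous_sqrt.comp (continuous_const.sub (continuous_pow 2)))
  -- general continuity criterion
  have hcontAt : ∀ k : ℝ, B < k ^ 2 →
      Real.cos (D * Real.sqrt (A - k ^ 2)) ≠ 0 → ContinuousAt F k := by
    intro k hk hcos
    have hFe : F = fun k => Real.tan (D * Real.sqrt (A - k ^ 2)) +
        (ρb / ρw) * Real.sqrt (A - k ^ 2) / Real.sqrt (k ^ 2 - B) := funext hF
    rw [hFe]
    apply ContinuousAt.add
    · exact ContinuousAt.comp (g := Real.tan) (Real.continuousAt_tan.mpr hcos) hθc.continuousAt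
    · apply ContinuousAt.div
      · exact (continuous_const.mul (Real.continuous_sqrt.comp
          (continuous_const.sub (continuous_pow 2)))).continuousAt
      · exact (Real.continuous_sqrt.comp ((continuous_pow 2).sub continuous_const)).continuousAt
      · exact (Real.sqrt_pos.mpr (by linarith)).ne'
  constructor
  · -- continuity on the stated set
    intro k hk
    obtain ⟨hk1, hk2⟩ := hk
    refine (hcontAt k (hBlt k hk1.1) ?_).continuousWithinAt
    intro h0
    rcases Real.cos_eq_zero_iff.mp h0 with ⟨j, hj⟩
    exact hk2 j (by rw [hj]; ring)
  · -- existence of a root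
    have ha0 : 0 < a := hωcb.trans ha
    have hθa' : Real.sqrt (A - a ^ 2) = π * m / D := by
      field_simp at hθa ⊢; linarith [hθa]
    have hsa : 0 < Real.sqrt (A - a ^ 2) := by
      rw [hθa']; positivity
    have hsb : 0 < Real.sqrt (A - b ^ 2) := by
      have : 0 < D * Real.sqrt (A - b ^ 2) := by rw [hθb]; nlinarith
      nlinarith [Real.sqrt_nonneg (A - b ^ 2)]
    have hAb : 0 < A - b ^ 2 := Real.sqrt_pos.mp hsb
    -- strict antitonicity of θ on (0, b]
    have hθlt : ∀ x y : ℝ, 0 < x → x < y → y ≤ b →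
        D * Real.sqrt (A - y ^ 2) < D * Real.sqrt (A - x ^ 2) := by
      intro x y hx hxy hyb
      have h1 : x ^ 2 < y ^ 2 := pow_lt_pow_left₀ hxy hx.le (by norm_num)
      have h2 : y ^ 2 ≤ b ^ 2 := pow_le_pow_left₀ (by linarith) hyb 2
      have h3 : 0 ≤ A - y ^ 2 := by linarith
      exact mul_lt_mul_of_pos_left (Real.sqrt_lt_sqrt h3 (by linarith)) hD
    -- F a > 0
    have hga : 0 < (ρb / ρw) * Real.sqrt (A - a ^ 2) / Real.sqrt (a ^ 2 - B) := by
      have := Real.sqrt_pos.mpr (by linarith [hBlt a ha] : 0 < a ^ 2 - B)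
      positivity
    have hFa : 0 < F a := by
      rw [hF a, hθa]
      have : Real.tan (π * ↑m) = 0 := by rw [mul_comm]; exact Real.tan_nat_mul_pi m
      rw [this]; linarith
    -- θ tends to π(m-1/2) from above along 𝓝[Ioo a b] b
    have hθtend : Tendsto (fun k : ℝ => D * Real.sqrt (A - k ^ 2)) (𝓝[Ioo a b] b)
        (𝓝[>] (π * ((m : ℝ) - 1 / 2))) := by
      rw [tendsto_nhdsWithin_iff]
      constructor
      · have h1 := (hθc.tendsto b).mono_left (nhdsWithin_le_nhds (s := Ioo a b))
        rwa [hθb] at h1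
      · filter_upwards [eventually_mem_nhdsWithin] with k hk
        have := hθlt k b (ha0.trans hk.1) hk.2 le_rfl
        rw [hθb] at this
        exact this
    -- tan tends to -∞ at π(m-1/2)⁺
    have htan : Tendsto Real.tan (𝓝[>] (π * ((m : ℝ) - 1 / 2))) atBot := by
      have hsub : Tendsto (fun x : ℝ => x - m * π) (𝓝[>] (π * ((m : ℝ) - 1 / 2)))
          (𝓝[>] (-(π / 2))) := by
        rw [tendsto_nhdsWithin_iff]
        constructor
        · have h1 : Tendsto (fun x : ℝ => x - m * π) (𝓝 (π * ((m : ℝ) - 1 / 2)))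
              (𝓝 (π * ((m : ℝ) - 1 / 2) - m * π)) :=
            (continuous_id.sub continuous_const).tendsto _
          have h2 : π * ((m : ℝ) - 1 / 2) - m * π = -(π / 2) := by ring
          rw [h2] at h1
          exact h1.mono_left nhdsWithin_le_nhds
        · filter_upwards [eventually_mem_nhdsWithin] with x hx
          simp only [mem_Ioi] at hx ⊢
          linarith
      have key := Real.tendsto_tan_neg_pi_div_two.comp hsub
      have heq : (Real.tan ∘ fun x : ℝ => x - m * π) = Real.tan := by
        funext x
        exact Real.tan_periodic.sub_nat_mul_eq m
      rwa [heq] at key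
    have htotal : Tendsto (fun k : ℝ => Real.tan (D * Real.sqrt (A - k ^ 2)))
        (𝓝[Ioo a b] b) atBot := htan.comp hθtend
    -- g tends to a finite limit at b
    have hgb : Tendsto (fun k : ℝ => (ρb / ρw) * Real.sqrt (A - k ^ 2) / Real.sqrt (k ^ 2 - B))
        (𝓝[Ioo a b] b)
        (𝓝 ((ρb / ρw) * Real.sqrt (A - b ^ 2) / Real.sqrt (b ^ 2 - B))) := by
      have hc : ContinuousAt (fun k : ℝ => (ρb / ρw) * Real.sqrt (A - k ^ 2) /
          Real.sqrt (k ^ 2 - B)) b := by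
        apply ContinuousAt.div
        · exact (continuous_const.mul (Real.continuous_sqrt.comp
            (continuous_const.sub (continuous_pow 2)))).continuousAt
        · exact (Real.continuous_sqrt.comp ((continuous_pow 2).sub continuous_const)).continuousAt
        · exact (Real.sqrt_pos.mpr (by linarith [hBlt b (ha.trans hab)])).ne'
      exact hc.continuousWithinAt
    set L := (ρb / ρw) * Real.sqrt (A - b ^ 2) / Real.sqrt (b ^ 2 - B) with hL
    -- find c ∈ Ioo a b with F c < 0
    have hFneg : ∀ᶠ k in 𝓝[Ioo a b] b, F k < 0 := by
      filter_upwards [htotal.eventually (eventually_le_atBot (-(L + 1))),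
        hgb.eventually (Iio_mem_nhds (lt_add_one L))] with k h1 h2
      rw [hF k]
      have h2' : (ρb / ρw) * Real.sqrt (A - k ^ 2) / Real.sqrt (k ^ 2 - B) < L + 1 := h2
      linarith
    have : (𝓝[Ioo a b] b).NeBot := right_nhdsWithin_Ioo_neBot hab
    obtain ⟨c, hcF, hcmem⟩ := (hFneg.and eventually_mem_nhdsWithin).exists
    -- continuity of F on [a, c]
    have hcont : ContinuousOn F (Icc a c) := by
      intro k hk
      have hk2 : B < k ^ 2 := hBlt k (ha.trans_le hk.1)
      refine (hcontAt k hk2 ?_).continuousWithinAt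
      -- bounds on θ k
      have hupper : D * Real.sqrt (A - k ^ 2) ≤ π * m := by
        rw [← hθa]
        rcases eq_or_lt_of_le hk.1 with h | h
        · rw [← h]
        · exact (hθlt a k ha0 h (hk.2.trans hcmem.2.le)).le
      have hlower : π * ((m : ℝ) - 1 / 2) < D * Real.sqrt (A - k ^ 2) := by
        rw [← hθb]
        exact hθlt k b (ha0.trans_le hk.1) (hk.2.trans_lt hcmem.2) le_rfl
      intro h0
      rcases Real.cos_eq_zero_iff.mp h0 with ⟨j, hj⟩
      rw [hj] at hupper hlower
      have hj1 : (m : ℝ) - 1 < (j : ℝ) := by nlinarith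
      have hj2 : (j : ℝ) < (m : ℝ) := by nlinarith
      have hj1' : (m : ℤ) - 1 < j := by exact_mod_cast hj1
      have hj2' : j < (m : ℤ) := by exact_mod_cast hj2
      omega
    -- intermediate value theorem
    have h0mem : (0 : ℝ) ∈ Icc (F c) (F a) := ⟨hcF.le, hFa.le⟩
    obtain ⟨k, hkmem, hk0⟩ := intermediate_value_Icc' hcmem.1.le hcont h0mem
    refine ⟨k, ⟨?_, hkmem.2.trans_lt hcmem.2⟩, hk0⟩
    rcases eq_or_lt_of_le hkmem.1 with h | h
    · exfalso; rw [← h] at hk0; linarith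
    · exact h
end

section
/- Let h be the Gaussian window with ĥ(ξ) = exp(−ξ²/(2σ²)). For a modal signal with û_n(ω) = A_n(ω) e^{iΦ_n(ω)}, where A_n is C¹ with |A_n'| ≤ L everywhere and Φ_n(ξ+ω) = Φ_n(ω) − ξ t_n(ω) exactly (linear phase around ω), the spectrogram S_n(t,ω) = (1/4π²)|∫ û_n(ξ+ω) ĥ(ξ) e^{iξt} dξ|² satisfies |√(S_n(t,ω)) − |A_n(ω)| h(t − t_n(ω))| ≤ (L/(2π)) ∫_ℝ |ξ| e^{−ξ²/(2σ²)} dξ = Lσ²/π. -/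
open Real MeasureTheory

theorem spectrogram_amplitude_error (σ : ℝ) (hσ : 0 < σ) (A : ℝ → ℂ) (Φ : ℝ → ℝ)
    (L : ℝ) (hL : 0 ≤ L) (hA : Differentiable ℝ A) (hA' : ∀ ξ, ‖deriv A ξ‖ ≤ L)
    (ω tn : ℝ) (hΦ : ∀ ξ : ℝ, Φ (ξ + ω) = Φ ω - ξ * tn)
    (S : ℝ → ℝ)
    (hS : ∀ t, S t = (1 / (4 * π ^ 2)) *
      ‖∫ ξ : ℝ, A (ξ + ω) * Complex.exp (Complex.I * (Φ (ξ + ω) : ℂ)) *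
          (Real.exp (-(ξ ^ 2) / (2 * σ ^ 2)) : ℂ) * Complex.exp (Complex.I * ξ * t)‖ ^ 2) :
    (∀ t, |Real.sqrt (S t) -
        ‖A ω‖ * (σ / Real.sqrt (2 * π) * Real.exp (-(σ ^ 2 * (t - tn) ^ 2) / 2))| ≤
      (L / (2 * π)) * ∫ ξ : ℝ, |ξ| * Real.exp (-(ξ ^ 2) / (2 * σ ^ 2))) ∧
      (L / (2 * π)) * (∫ ξ : ℝ, |ξ| * Real.exp (-(ξ ^ 2) / (2 * σ ^ 2))) =
        L * σ ^ 2 / π := by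
  have hπ : (0:ℝ) < π := Real.pi_pos
  have hσ2 : (0:ℝ) < 2 * σ ^ 2 := by positivity
  have hb : (0:ℝ) < (2 * σ ^ 2)⁻¹ := by positivity
  have harg : ∀ ξ : ℝ, -(2 * σ ^ 2)⁻¹ * ξ ^ 2 = -(ξ ^ 2) / (2 * σ ^ 2) := fun ξ => by ring
  -- value of the moment integral
  have hIoi : ∫ x in Set.Ioi (0:ℝ), x * Real.exp (-(2 * σ ^ 2)⁻¹ * x ^ 2) = σ ^ 2 := by
    have key := integral_mul_cexp_neg_mul_sq
      (b := (((2 * σ ^ 2)⁻¹ : ℝ) : ℂ))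
      (show (0:ℝ) < ((((2 * σ ^ 2)⁻¹ : ℝ) : ℂ)).re by rw [Complex.ofReal_re]; exact hb)
    have h2 : ∫ x in Set.Ioi (0:ℝ),
        ((x * Real.exp (-(2 * σ ^ 2)⁻¹ * x ^ 2) : ℝ) : ℂ) = ((σ ^ 2 : ℝ) : ℂ) := by
      rw [show (fun x : ℝ => ((x * Real.exp (-(2 * σ ^ 2)⁻¹ * x ^ 2) : ℝ) : ℂ))
          = fun x : ℝ => (x : ℂ) *
            Complex.exp (-(((2 * σ ^ 2)⁻¹ : ℝ) : ℂ) * (x : ℂ) ^ 2) from funext fun x => by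
        rw [Complex.ofReal_mul, Complex.ofReal_exp]
        congr 1
        push_cast
        ring]
      rw [key]
      norm_cast
      field_simp
    have h3 : ((∫ x in Set.Ioi (0:ℝ), x * Real.exp (-(2 * σ ^ 2)⁻¹ * x ^ 2) : ℝ) : ℂ)
        = ((σ ^ 2 : ℝ) : ℂ) := by
      rw [← h2]
      exact (integral_ofReal (𝕜 := ℂ)).symm
    exact_mod_cast h3
  have hM : (∫ ξ : ℝ, |ξ| * Real.exp (-(ξ ^ 2) / (2 * σ ^ 2))) = 2 * σ ^ 2 := by
    have hca := integral_comp_abs (f := fun x => x * Real.exp (-(2 * σ ^ 2)⁻¹ * x ^ 2))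
    simp only [sq_abs] at hca
    simp only [harg] at hca hIoi
    rw [hca, hIoi]
  refine ⟨?_, by rw [hM]; field_simp⟩
  -- main estimate
  intro t
  set s : ℝ := t - tn with hs
  set E : ℝ → ℂ := fun ξ =>
    (Real.exp (-(ξ ^ 2) / (2 * σ ^ 2)) : ℂ) * Complex.exp (Complex.I * ξ * s) with hE
  set f : ℝ → ℂ := fun ξ => A (ξ + ω) * E ξ with hf
  set g : ℝ → ℂ := fun ξ => A ω * E ξ with hg
  have hexp1 : ∀ x : ℝ, ‖Complex.exp (Complex.I * x * s)‖ = 1 := fun x => by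
    rw [show Complex.I * x * s = ((x * s : ℝ) : ℂ) * Complex.I by push_cast; ring,
      Complex.norm_exp_ofReal_mul_I]
  have hEnorm : ∀ ξ : ℝ, ‖E ξ‖ = Real.exp (-(ξ ^ 2) / (2 * σ ^ 2)) := fun ξ => by
    rw [hE]
    simp only [norm_mul, hexp1 ξ, mul_one, Complex.norm_real, Real.norm_eq_abs, Real.abs_exp]
  -- Lipschitz bound
  have hlip : LipschitzWith L.toNNReal A :=
    lipschitzWith_of_nnnorm_deriv_le hA fun x => by
      rw [← NNReal.coe_le_coe, coe_nnnorm, Real.coe_toNNReal _ hL]; exact hA' x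
  have hbound : ∀ ξ : ℝ, ‖A (ξ + ω) - A ω‖ ≤ L * |ξ| := fun ξ => by
    have h := hlip.dist_le_mul (ξ + ω) ω
    rwa [dist_eq_norm, Real.dist_eq, add_sub_cancel_right, Real.coe_toNNReal _ hL] at h
  -- integrability
  have hexp_int : Integrable (fun ξ : ℝ => Real.exp (-(ξ ^ 2) / (2 * σ ^ 2))) := by
    simpa only [harg] using integrable_exp_neg_mul_sq hb
  have habs_int : Integrable (fun ξ : ℝ => |ξ| * Real.exp (-(ξ ^ 2) / (2 * σ ^ 2))) := by
    have h1 := (integrable_mul_exp_neg_mul_sq hb).abs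
    simpa only [abs_mul, Real.abs_exp, harg] using h1
  have hE_int : Integrable E := by
    set b' : ℂ := (((2 * σ ^ 2)⁻¹ : ℝ) : ℂ) with hb'
    have hb're : 0 < b'.re := by rw [hb', Complex.ofReal_re]; exact hb
    have hpt : ∀ ξ : ℝ, Complex.exp (-b' * ξ ^ 2 + (Complex.I * s) * ξ + 0) = E ξ := by
      intro ξ
      rw [hE]
      simp only [Complex.ofReal_exp]
      rw [← Complex.exp_add]
      congr 1
      push_cast [hb']
      field_simp
      try ring
    exact (integrable_cexp_quadratic hb're (Complex.I * s) 0).congr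
      (Filter.Eventually.of_forall hpt)
  have hf_cont : Continuous f := by
    rw [hf, hE]
    have hAc : Continuous A := hA.continuous
    fun_prop
  have hf_int : Integrable f := by
    refine ((hexp_int.const_mul ‖A ω‖).add (habs_int.const_mul L)).mono'
      hf_cont.aestronglyMeasurable (Filter.Eventually.of_forall fun ξ => ?_)
    have h1 : ‖f ξ‖ = ‖A (ξ + ω)‖ * Real.exp (-(ξ ^ 2) / (2 * σ ^ 2)) := by
      rw [hf]; simp only [norm_mul, hEnorm ξ]
    have h2 : ‖A (ξ + ω)‖ ≤ ‖A ω‖ + L * |ξ| := by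
      have := norm_sub_norm_le (A (ξ + ω)) (A ω)
      have hb' := hbound ξ
      linarith
    rw [h1]
    have := mul_le_mul_of_nonneg_right h2 (Real.exp_nonneg (-(ξ ^ 2) / (2 * σ ^ 2)))
    calc ‖A (ξ + ω)‖ * Real.exp (-(ξ ^ 2) / (2 * σ ^ 2))
        ≤ (‖A ω‖ + L * |ξ|) * Real.exp (-(ξ ^ 2) / (2 * σ ^ 2)) := this
      _ = ‖A ω‖ * Real.exp (-(ξ ^ 2) / (2 * σ ^ 2))
          + L * (|ξ| * Real.exp (-(ξ ^ 2) / (2 * σ ^ 2))) := by ring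
  have hg_int : Integrable g := by
    simpa only [hg] using hE_int.const_mul (A ω)
  -- rewrite S t
  have horig : ∀ ξ : ℝ, A (ξ + ω) * Complex.exp (Complex.I * (Φ (ξ + ω) : ℂ)) *
      (Real.exp (-(ξ ^ 2) / (2 * σ ^ 2)) : ℂ) * Complex.exp (Complex.I * ξ * t)
      = Complex.exp (Complex.I * (Φ ω : ℂ)) * f ξ := by
    intro ξ
    have he : Complex.exp (Complex.I * (Φ (ξ + ω) : ℂ)) * Complex.exp (Complex.I * ξ * t)
        = Complex.exp (Complex.I * (Φ ω : ℂ)) * Complex.exp (Complex.I * ξ * s) := by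
      rw [hΦ ξ, ← Complex.exp_add, ← Complex.exp_add]
      congr 1
      push_cast [hs]
      ring
    calc A (ξ + ω) * Complex.exp (Complex.I * (Φ (ξ + ω) : ℂ)) *
        (Real.exp (-(ξ ^ 2) / (2 * σ ^ 2)) : ℂ) * Complex.exp (Complex.I * ξ * t)
        = A (ξ + ω) * (Real.exp (-(ξ ^ 2) / (2 * σ ^ 2)) : ℂ) *
          (Complex.exp (Complex.I * (Φ (ξ + ω) : ℂ)) * Complex.exp (Complex.I * ξ * t)) := by
          ring
      _ = Complex.exp (Complex.I * (Φ ω : ℂ)) * f ξ := by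
          rw [he, hf, hE]; ring
  have hsqrt : Real.sqrt (S t) = (1 / (2 * π)) * ‖∫ ξ : ℝ, f ξ‖ := by
    rw [hS t]
    simp only [horig]
    rw [integral_const_mul]
    rw [norm_mul]
    rw [show ‖Complex.exp (Complex.I * (Φ ω : ℂ))‖ = 1 by
      rw [show Complex.I * (Φ ω : ℂ) = ((Φ ω : ℝ) : ℂ) * Complex.I by ring,
        Complex.norm_exp_ofReal_mul_I]]
    rw [one_mul]
    rw [show (1 / (4 * π ^ 2)) * ‖∫ ξ : ℝ, f ξ‖ ^ 2
        = ((1 / (2 * π)) * ‖∫ ξ : ℝ, f ξ‖) ^ 2 by ring]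
    exact Real.sqrt_sq (by positivity)
  -- Gaussian Fourier integral
  have hEval : ‖∫ ξ : ℝ, g ξ‖
      = ‖A ω‖ * (Real.sqrt (2 * π) * σ * Real.exp (-(σ ^ 2 * s ^ 2) / 2)) := by
    set b' : ℂ := (((2 * σ ^ 2)⁻¹ : ℝ) : ℂ) with hb'
    have hb're : 0 < b'.re := by rw [hb', Complex.ofReal_re]; exact hb
    have FG := fourierIntegral_gaussian hb're (s : ℂ)
    have hpt : ∀ x : ℝ, Complex.exp (Complex.I * (s : ℂ) * x) * Complex.exp (-b' * x ^ 2)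
        = E x := by
      intro x
      rw [hE]
      rw [mul_comm]
      congr 1
      · simp only [Complex.ofReal_exp]
        congr 1
        push_cast [hb']
        field_simp
        try ring
      · congr 1; ring
    have hEint_val : (∫ ξ : ℝ, E ξ)
        = ((Real.sqrt (2 * π) * σ : ℝ) : ℂ) * ((Real.exp (-(σ ^ 2 * s ^ 2) / 2) : ℝ) : ℂ) := by
      rw [show (∫ ξ : ℝ, E ξ) = ∫ x : ℝ,
          Complex.exp (Complex.I * (s : ℂ) * x) * Complex.exp (-b' * x ^ 2) by
        congr 1; funext x; rw [hpt x]]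
      rw [FG]
      congr 1
      · have hpos : (0:ℝ) ≤ 2 * π * σ ^ 2 := by positivity
        rw [show (π : ℂ) / b' = ((2 * π * σ ^ 2 : ℝ) : ℂ) by
          rw [hb']; push_cast; field_simp; try ring]
        rw [show (1 / 2 : ℂ) = ((1 / 2 : ℝ) : ℂ) by norm_num]
        rw [← Complex.ofReal_cpow hpos]
        rw [show (2 * π * σ ^ 2 : ℝ) ^ (1 / 2 : ℝ) = Real.sqrt (2 * π) * σ by
          rw [← Real.sqrt_eq_rpow, show (2 * π * σ ^ 2 : ℝ) = (2 * π) * σ ^ 2 by ring,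
            Real.sqrt_mul (by positivity), Real.sqrt_sq hσ.le]]
      · rw [show -(s : ℂ) ^ 2 / (4 * b') = ((-(σ ^ 2 * s ^ 2) / 2 : ℝ) : ℂ) by
          rw [hb']; push_cast; field_simp; try ring]
        rw [Complex.ofReal_exp]
    have : (∫ ξ : ℝ, g ξ) = A ω * ∫ ξ : ℝ, E ξ := by
      rw [hg]; exact integral_const_mul (A ω) E
    rw [this, hEint_val, norm_mul, norm_mul, Complex.norm_real, Complex.norm_real,
      Real.norm_eq_abs, Real.norm_eq_abs, Real.abs_exp,
      abs_of_nonneg (by positivity : (0:ℝ) ≤ Real.sqrt (2 * π) * σ)]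
  -- difference bound
  have hdiff : ‖(∫ ξ : ℝ, f ξ) - ∫ ξ : ℝ, g ξ‖
      ≤ L * ∫ ξ : ℝ, |ξ| * Real.exp (-(ξ ^ 2) / (2 * σ ^ 2)) := by
    rw [← integral_sub hf_int hg_int, ← integral_const_mul]
    refine norm_integral_le_of_norm_le (habs_int.const_mul L)
      (Filter.Eventually.of_forall fun ξ => ?_)
    have h1 : f ξ - g ξ = (A (ξ + ω) - A ω) * E ξ := by rw [hf, hg]; ring
    rw [h1, norm_mul, hEnorm ξ]
    calc ‖A (ξ + ω) - A ω‖ * Real.exp (-(ξ ^ 2) / (2 * σ ^ 2))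
        ≤ (L * |ξ|) * Real.exp (-(ξ ^ 2) / (2 * σ ^ 2)) :=
          mul_le_mul_of_nonneg_right (hbound ξ) (Real.exp_nonneg _)
      _ = L * (|ξ| * Real.exp (-(ξ ^ 2) / (2 * σ ^ 2))) := by ring
  have habs : |‖∫ ξ : ℝ, f ξ‖ - ‖∫ ξ : ℝ, g ξ‖|
      ≤ L * ∫ ξ : ℝ, |ξ| * Real.exp (-(ξ ^ 2) / (2 * σ ^ 2)) :=
    le_trans (abs_norm_sub_norm_le _ _) hdiff
  -- assemble
  have hsq2π : Real.sqrt (2 * π) * Real.sqrt (2 * π) = 2 * π :=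
    Real.mul_self_sqrt (by positivity)
  have hsqrt2π_pos : (0:ℝ) < Real.sqrt (2 * π) := Real.sqrt_pos.mpr (by positivity)
  have hrw : ‖A ω‖ * (σ / Real.sqrt (2 * π) * Real.exp (-(σ ^ 2 * (t - tn) ^ 2) / 2))
      = (1 / (2 * π)) * ‖∫ ξ : ℝ, g ξ‖ := by
    have hkey : σ / Real.sqrt (2 * π) = Real.sqrt (2 * π) * σ / (2 * π) := by
      rw [eq_div_iff (by positivity : (2 * π : ℝ) ≠ 0), div_mul_eq_mul_div,
        div_eq_iff hsqrt2π_pos.ne']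
      linear_combination (-σ) * hsq2π
    rw [hEval, ← hs, hkey]
    ring
  calc |Real.sqrt (S t) -
      ‖A ω‖ * (σ / Real.sqrt (2 * π) * Real.exp (-(σ ^ 2 * (t - tn) ^ 2) / 2))|
      = (1 / (2 * π)) * |‖∫ ξ : ℝ, f ξ‖ - ‖∫ ξ : ℝ, g ξ‖| := by
        rw [hsqrt, hrw, ← mul_sub, abs_mul, abs_of_pos (by positivity : (0:ℝ) < 1 / (2 * π))]
    _ ≤ (1 / (2 * π)) * (L * ∫ ξ : ℝ, |ξ| * Real.exp (-(ξ ^ 2) / (2 * σ ^ 2))) := by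
        exact mul_le_mul_of_nonneg_left habs (by positivity)
    _ = (L / (2 * π)) * ∫ ξ : ℝ, |ξ| * Real.exp (-(ξ ^ 2) / (2 * σ ^ 2)) := by ring
end
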